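/- Let T be the prefix of M_{n+1} of length t < q_{n+1} and write t = d₁ + d₂q₁ + ⋯ + d_{n+1}q_n in the Ostrowski numeration system in base θ. Then T = M_n^{d_{n+1}} M_{n−1}^{d_n} ⋯ M₀^{d₁}, i.e., the prefix factors as a product of decreasing standard words with exponents the Ostrowski digits of its length. -/

import Mathlib

/-! Write `t = d_{n+1} q_n + s` with `s` the Ostrowski value of the lower digits. Since
`M_{n+1} = M_n^{a_{n+1}} M_{n-1}`, the prefix of length `t` is `M_n^{d_{n+1}}` followed by the
prefix of length `s` of `M_n^{a_{n+1} - d_{n+1}} M_{n-1}`. The Ostrowski conditions give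
`s < q_n`, and `s < q_{n-1}` when `d_{n+1} = a_{n+1}`; as `M_{n-1}` is a prefix of `M_n`, that
prefix is the prefix of length `s` of `M_n`, which factors by induction. -/

/-- `m`-fold concatenation of a word. -/
def wpow (W : List ℕ) : ℕ → List ℕ
  | 0 => []
  | n + 1 => W ++ wpow W n

open Finset

theorem wpow_length (W : List ℕ) (m : ℕ) : (wpow W m).length = m * W.length := by
  induction m with
  | zero => simp [wpow]
  | succ m ih => simp [wpow, ih, Nat.succ_mul, Nat.add_comm]

theorem take_wpow_append (W X : List ℕ) {c m : ℕ} (hcm : c ≤ m) (r : ℕ) :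
    (wpow W m ++ X).take (c * W.length + r) = wpow W c ++ (wpow W (m - c) ++ X).take r := by
  induction c generalizing m with
  | zero => simp [wpow]
  | succ c ih =>
    obtain ⟨m, rfl⟩ : ∃ m', m = m' + 1 := ⟨m - 1, by omega⟩
    rw [show (c + 1) * W.length + r = W.length + (c * W.length + r) by ring, wpow,
      List.append_assoc, List.take_length_add_append, ih (by omega)]
    simp [wpow]

theorem take_wpow_succ_append (W X : List ℕ) (m : ℕ) {r : ℕ} (hr : r ≤ W.length) :
    (wpow W (m + 1) ++ X).take r = W.take r := by
  rw [wpow, List.append_assoc, List.take_append_of_le_length hr]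

theorem flatten_map_reverse_range_succ {α : Type*} (f : ℕ → List α) (m : ℕ) :
    ((List.range (m + 1)).reverse.map f).flatten
      = f m ++ ((List.range m).reverse.map f).flatten := by
  simp [List.range_succ]

structure ConvergentDenominators (a q : ℕ → ℕ) : Prop where
  zero : q 0 = 1
  one : q 1 = a 1
  succ : ∀ k, q (k + 2) = a (k + 2) * q (k + 1) + q k

structure StandardWords (a : ℕ → ℕ) (M : ℕ → List ℕ) : Prop where
  zero : M 0 = [0]
  one : M 1 = wpow [0] (a 1 - 1) ++ [1]
  succ : ∀ k, M (k + 2) = wpow (M (k + 1)) (a (k + 2)) ++ M k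

structure IsOstrowskiDigits (a d : ℕ → ℕ) (N : ℕ) : Prop where
  one_lt : d 1 < a 1
  le : ∀ j, 1 ≤ j → j ≤ N → d j ≤ a j
  eq_zero_of_succ_eq : ∀ j, 1 ≤ j → j < N → d (j + 1) = a (j + 1) → d j = 0

theorem IsOstrowskiDigits.mono {a d : ℕ → ℕ} {N N' : ℕ} (hd : IsOstrowskiDigits a d N)
    (hN : N' ≤ N) : IsOstrowskiDigits a d N' :=
  ⟨hd.one_lt, fun j hj hjN => hd.le j hj (hjN.trans hN),
    fun j hj hjN => hd.eq_zero_of_succ_eq j hj (hjN.trans_le hN)⟩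

theorem IsOstrowskiDigits.sum_lt {a q d : ℕ → ℕ} (hq : ConvergentDenominators a q) {N : ℕ}
    (hd : IsOstrowskiDigits a d N) : ∑ j ∈ range N, d (j + 1) * q j < q N := by
  induction N using Nat.twoStepInduction with
  | zero => simp [hq.zero]
  | one => simpa [hq.zero, hq.one] using hd.one_lt
  | more k ih₀ ih₁ =>
    have hs₁ := ih₁ (hd.mono (by omega))
    rw [sum_range_succ, hq.succ]
    change ∑ j ∈ range (k + 1), d (j + 1) * q j + d (k + 2) * q (k + 1) < _
    by_cases hfull : d (k + 2) = a (k + 2)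
    · have hs₀ := ih₀ (hd.mono (by omega))
      rw [sum_range_succ, hd.eq_zero_of_succ_eq (k + 1) (by omega) (by omega) hfull, hfull]
      omega
    · have hlt : d (k + 2) + 1 ≤ a (k + 2) := by have := hd.le (k + 2) (by omega) le_rfl; omega
      have := Nat.mul_le_mul_right (q (k + 1)) hlt
      rw [Nat.succ_mul] at this
      omega

section StandardWords

variable {a : ℕ → ℕ} {M : ℕ → List ℕ}

theorem StandardWords.length_eq {q : ℕ → ℕ} (hM : StandardWords a M)
    (hq : ConvergentDenominators a q) (ha : 1 ≤ a 1) (k : ℕ) : (M k).length = q k := by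
  induction k using Nat.twoStepInduction with
  | zero => simp [hM.zero, hq.zero]
  | one => simp [hM.one, hq.one, wpow_length]; omega
  | more k ih₀ ih₁ => simp [hM.succ, hq.succ, wpow_length, ih₀, ih₁]

theorem StandardWords.take_succ (hM : StandardWords a M) (ha : ∀ k, 1 ≤ k → 1 ≤ a k)
    {k r : ℕ} (hr : r < (M k).length) : (M (k + 1)).take r = (M k).take r := by
  cases k with
  | zero => simp_all [hM.zero]
  | succ k =>
    obtain ⟨b, hb⟩ := Nat.exists_eq_add_one_of_ne_zero (Nat.one_le_iff_ne_zero.mp (ha (k + 2) (by omega)))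
    rw [hM.succ, hb, take_wpow_succ_append _ _ _ hr.le]

theorem StandardWords.take_sum_eq_flatten {q d : ℕ → ℕ} (hM : StandardWords a M)
    (hq : ConvergentDenominators a q) (ha : ∀ k, 1 ≤ k → 1 ≤ a k) {N : ℕ}
    (hd : IsOstrowskiDigits a d N) :
    (M N).take (∑ j ∈ range N, d (j + 1) * q j)
      = ((List.range N).reverse.map (fun j => wpow (M j) (d (j + 1)))).flatten := by
  have hlen := hM.length_eq hq (ha 1 le_rfl)
  induction N using Nat.twoStepInduction with
  | zero => simp
  | one =>
    have := take_wpow_append [0] [1] (Nat.le_sub_one_of_lt hd.one_lt) 0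
    rw [hM.one]
    simpa [hq.zero, hM.zero] using this
  | more k ih₀ ih₁ =>
    set s := ∑ j ∈ range (k + 1), d (j + 1) * q j
    have hs : s < q (k + 1) := (hd.mono (by omega)).sum_lt hq
    have htail :
        (wpow (M (k + 1)) (a (k + 2) - d (k + 2)) ++ M k).take s = (M (k + 1)).take s := by
      by_cases hfull : d (k + 2) = a (k + 2)
      · have hs₀ : s < q k := by
          simpa [s, sum_range_succ, hd.eq_zero_of_succ_eq (k + 1) (by omega) (by omega) hfull]
            using (hd.mono (Nat.le_add_right k 2)).sum_lt hq
        rw [hfull, Nat.sub_self, wpow, List.nil_append, hM.take_succ ha (hlen _ ▸ hs₀)]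
      · obtain ⟨b, hb⟩ : ∃ b, a (k + 2) - d (k + 2) = b + 1 :=
          ⟨a (k + 2) - d (k + 2) - 1, by have := hd.le (k + 2) (by omega) le_rfl; omega⟩
        rw [hb, take_wpow_succ_append _ _ _ (hlen _ ▸ hs.le)]
    rw [flatten_map_reverse_range_succ, sum_range_succ, Nat.add_comm, ← hlen, hM.succ,
      take_wpow_append _ _ (hd.le (k + 2) (by omega) le_rfl), htail, ih₁ (hd.mono (by omega))]

end StandardWords

theorem prefix_product_formula_general (a : ℕ → ℕ) (ha : ∀ k : ℕ, 1 ≤ k → 1 ≤ a k)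
    (q : ℕ → ℕ) (hq0 : q 0 = 1) (hq1 : q 1 = a 1)
    (hq : ∀ k : ℕ, 1 ≤ k → q (k + 1) = a (k + 1) * q k + q (k - 1))
    (M : ℕ → List ℕ) (hM0 : M 0 = [0])
    (hM1 : M 1 = wpow [0] (a 1 - 1) ++ [1])
    (hM : ∀ k : ℕ, 1 ≤ k → M (k + 1) = wpow (M k) (a (k + 1)) ++ M (k - 1))
    (n t : ℕ)
    (d : ℕ → ℕ) (hd1 : d 1 < a 1)
    (hd : ∀ j : ℕ, 1 ≤ j → j ≤ n + 1 → d j ≤ a j)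
    (hrule : ∀ j : ℕ, 1 ≤ j → j ≤ n → d (j + 1) = a (j + 1) → d j = 0)
    (htsum : t = ∑ j ∈ Finset.range (n + 1), d (j + 1) * q j) :
    (M (n + 1)).take t
      = ((List.range (n + 1)).reverse.map (fun j => wpow (M j) (d (j + 1)))).flatten := by
  have hden : ConvergentDenominators a q := ⟨hq0, hq1, fun k => hq (k + 1) (by omega)⟩
  have hstd : StandardWords a M := ⟨hM0, hM1, fun k => hM (k + 1) (by omega)⟩
  have hdig : IsOstrowskiDigits a d (n + 1) :=
    ⟨hd1, hd, fun j hj hjn => hrule j hj (by omega)⟩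
  rw [htsum]
  exact hstd.take_sum_eq_flatten hden ha hdig

/-- Product formula for prefixes of standard words: the prefix of `M_{n+1}` of
length `t < q_{n+1}` equals `M_n^{d_{n+1}} M_{n−1}^{d_n} ⋯ M₀^{d₁}`, where the
`d_j` are the Ostrowski digits of `t`. -/
theorem prefix_product_formula (a : ℕ → ℕ) (ha : ∀ k : ℕ, 1 ≤ k → 1 ≤ a k)
    (q : ℕ → ℕ) (hq0 : q 0 = 1) (hq1 : q 1 = a 1)
    (hq : ∀ k : ℕ, 1 ≤ k → q (k + 1) = a (k + 1) * q k + q (k - 1))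
    (M : ℕ → List ℕ) (hM0 : M 0 = [0])
    (hM1 : M 1 = wpow [0] (a 1 - 1) ++ [1])
    (hM : ∀ k : ℕ, 1 ≤ k → M (k + 1) = wpow (M k) (a (k + 1)) ++ M (k - 1))
    (n t : ℕ) (htlt : t < q (n + 1))
    (d : ℕ → ℕ) (hd1 : d 1 < a 1)
    (hd : ∀ j : ℕ, 1 ≤ j → j ≤ n + 1 → d j ≤ a j)
    (hrule : ∀ j : ℕ, 1 ≤ j → j ≤ n → d (j + 1) = a (j + 1) → d j = 0)
    (htsum : t = ∑ j ∈ Finset.range (n + 1), d (j + 1) * q j) :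
    (M (n + 1)).take t
      = ((List.range (n + 1)).reverse.map (fun j => wpow (M j) (d (j + 1)))).flatten :=
  prefix_product_formula_general a ha q hq0 hq1 hq M hM0 hM1 hM n t d hd1 hd hrule htsum
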